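/- arXiv:1905.08994 — 2 statements merged into one kernel-verified Lean document; each statement's English description precedes it below -/
import Mathlib

section
/- Let k ≥ 1 and m ≥ 1 be integers. Let A_0 = {z}, A_1, …, A_k be pairwise disjoint vertex sets with |A_k| ≥ m^k. For each w ∈ A_k let P_w be a path of length k from z to w containing exactly one vertex of each A_i. Then there exist j ∈ [k], a vertex x ∈ A_{k-j}, and m vertices w_1, …, w_m ∈ A_k such that the terminal segments P_{w_i}[x, w_i] (from x to w_i) are m paths of length j, every two of which share only the vertex x. -/
private theorem stmt_3_geom (m : ℕ) (n : ℕ) (hm : 1 ≤ m) :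
    (m - 1) * ∑ i ∈ Finset.range n, m ^ i + 1 = m ^ n := by
  induction n with
  | zero => simp
  | succ n ih =>
    rw [Finset.sum_range_succ, Nat.mul_add, pow_succ]
    have h1 : m ^ n * m = (m - 1) * m ^ n + m ^ n := by
      obtain ⟨p, rfl⟩ : ∃ p, m = p + 1 := ⟨m - 1, by omega⟩
      simp only [Nat.add_sub_cancel]
      ring
    omega


/-- partite spider lemma.
Given disjoint sets `A 0 = {z}, A 1, …, A k` with `|A k| ≥ m^k`, and for each
`w ∈ A k` a `z,w`-path `P w` of length `k` whose vertex at distance `i` from `z`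
lies in `A i`, there are `j ∈ [k]`, a vertex `x ∈ A (k-j)` and `m` vertices
`w ∈ A k` whose terminal segments `P w [x, w]` are paths of length `j` sharing
pairwise only the vertex `x`. -/
theorem stmt_3 {V : Type*} [DecidableEq V] (G : SimpleGraph V) (k m : ℕ)
    (hk : 1 ≤ k) (hm : 1 ≤ m)
    (A : ℕ → Finset V) (z : V) (hA0 : A 0 = {z})
    (hdisj : ∀ i j, i ≤ k → j ≤ k → i ≠ j → Disjoint (A i) (A j))
    (hAk : m ^ k ≤ (A k).card)
    (P : V → List V)
    (hlen : ∀ w ∈ A k, (P w).length = k + 1)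
    (hpath : ∀ w ∈ A k, (P w).Chain' G.Adj ∧ (P w).Nodup)
    (hends : ∀ w ∈ A k, (P w).head? = some z ∧ (P w).getLast? = some w)
    (hpartite : ∀ w ∈ A k, ∀ i, i ≤ k → ∀ a, (P w)[i]? = some a → a ∈ A i) :
    ∃ j, 1 ≤ j ∧ j ≤ k ∧ ∃ x ∈ A (k - j), ∃ T ⊆ A k, T.card = m ∧
      (∀ w ∈ T, ((P w).drop (k - j)).head? = some x) ∧
      ∀ w ∈ T, ∀ w' ∈ T, w ≠ w' →
        ∀ v, v ∈ (P w).drop (k - j) → v ∈ (P w').drop (k - j) → v = x := by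
  classical
  set f : ℕ → V → V := fun i w => (P w).getD i z with hf
  have hidx : ∀ w ∈ A k, ∀ i, i ≤ k → i < (P w).length := by
    intro w hw i hi; rw [hlen w hw]; omega
  have hgetf : ∀ w ∈ A k, ∀ i, i ≤ k → (P w)[i]? = some (f i w) := by
    intro w hw i hi
    show (P w)[i]? = some ((P w).getD i z)
    rw [List.getD_eq_getElem _ _ (hidx w hw i hi),
      List.getElem?_eq_getElem (hidx w hw i hi)]
  have hmemA : ∀ w ∈ A k, ∀ i, i ≤ k → f i w ∈ A i := by
    intro w hw i hi
    exact hpartite w hw i hi _ (hgetf w hw i hi)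
  have hf0 : ∀ w ∈ A k, f 0 w = z := by
    intro w hw
    have h := (hends w hw).1
    rw [List.head?_eq_getElem?, hgetf w hw 0 (by omega)] at h
    exact (Option.some_inj.mp h)
  have hfk : ∀ w ∈ A k, f k w = w := by
    intro w hw
    have h := (hends w hw).2
    rw [List.getLast?_eq_getElem?, hlen w hw] at h
    have h' := hgetf w hw k (le_refl k)
    simp only [Nat.add_sub_cancel] at h
    rw [h'] at h
    exact (Option.some_inj.mp h)
  -- the key predicate
  let Q : ℕ → Prop := fun j => 1 ≤ j ∧ j ≤ k ∧
    ∃ x ∈ A (k - j), m ^ j ≤ ((A k).filter fun w => f (k - j) w = x).card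
  have hQk : Q k := by
    refine ⟨hk, le_refl k, z, by simp [hA0], ?_⟩
    have : (A k).filter (fun w => f (k - k) w = z) = A k := by
      apply Finset.filter_true_of_mem
      intro w hw
      simpa using hf0 w hw
    rw [this]; exact hAk
  have hex : ∃ j, Q j := ⟨k, hQk⟩
  set j := Nat.find hex with hj
  obtain ⟨hj1, hjk, x, hxA, hScard⟩ : Q j := Nat.find_spec hex
  have hjmin : ∀ j', 1 ≤ j' → j' < j → ∀ v ∈ A (k - j'),
      ((A k).filter fun w => f (k - j') w = v).card < m ^ j' := by
    intro j' h1 hlt v hv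
    by_contra hcon
    push_neg at hcon
    exact Nat.find_min hex hlt ⟨h1, by omega, v, hv, hcon⟩
  set S : Finset V := (A k).filter (fun w => f (k - j) w = x) with hS
  have hSsub : S ⊆ A k := Finset.filter_subset _ _
  -- the "good" (pairwise internally disjoint tails) predicate
  let good : Finset V → Prop := fun T =>
    ∀ w1 ∈ T, ∀ w2 ∈ T, w1 ≠ w2 → ∀ i, k - j < i → i ≤ k → f i w1 ≠ f i w2
  -- take a maximal good subset of S
  have h𝒯 : ((S.powerset).filter (fun T => good T)).Nonempty := by
    refine ⟨∅, ?_⟩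
    simp only [Finset.mem_filter, Finset.mem_powerset]
    exact ⟨Finset.empty_subset _, by intro w1 h1; simp at h1⟩
  obtain ⟨T, hTmem, hTmax⟩ :=
    Finset.exists_max_image _ (fun T => T.card) h𝒯
  simp only [Finset.mem_filter, Finset.mem_powerset] at hTmem
  obtain ⟨hTS, hTgood⟩ := hTmem
  by_cases hTm : m ≤ T.card
  · -- success: extract a subset of size m
    obtain ⟨T', hT'T, hT'card⟩ := Finset.exists_subset_card_eq hTm
    have hT'S : T' ⊆ S := hT'T.trans hTS
    have hT'A : T' ⊆ A k := hT'S.trans hSsub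
    refine ⟨j, hj1, hjk, x, hxA, T', hT'A, hT'card, ?_, ?_⟩
    · intro w hw
      have hwA : w ∈ A k := hT'A hw
      have hx : f (k - j) w = x := (Finset.mem_filter.mp (hT'S hw)).2
      rw [List.head?_drop, hgetf w hwA (k - j) (by omega), hx]
    · intro w hw w' hw' hne v hv hv'
      have hwA : w ∈ A k := hT'A hw
      have hw'A : w' ∈ A k := hT'A hw'
      -- get positions
      obtain ⟨i1, hi1l, hi1⟩ := List.mem_iff_getElem.mp hv
      obtain ⟨i2, hi2l, hi2⟩ := List.mem_iff_getElem.mp hv'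
      rw [List.getElem_drop] at hi1 hi2
      have hl1 : (P w).length = k + 1 := hlen w hwA
      have hl2 : (P w').length = k + 1 := hlen w' hw'A
      rw [List.length_drop, hl1] at hi1l
      rw [List.length_drop, hl2] at hi2l
      have hle1 : k - j + i1 ≤ k := by omega
      have hle2 : k - j + i2 ≤ k := by omega
      have hv1 : f (k - j + i1) w = v := by
        rw [← hi1]
        have := hgetf w hwA (k - j + i1) hle1
        rw [List.getElem?_eq_getElem (hidx w hwA _ hle1)] at this
        exact (Option.some_inj.mp this).symm
      have hv2 : f (k - j + i2) w' = v := by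
        rw [← hi2]
        have := hgetf w' hw'A (k - j + i2) hle2
        rw [List.getElem?_eq_getElem (hidx w' hw'A _ hle2)] at this
        exact (Option.some_inj.mp this).symm
      have hvA1 : v ∈ A (k - j + i1) := hv1 ▸ hmemA w hwA _ hle1
      have hvA2 : v ∈ A (k - j + i2) := hv2 ▸ hmemA w' hw'A _ hle2
      have hi12 : i1 = i2 := by
        by_contra hne'
        have := hdisj (k - j + i1) (k - j + i2) hle1 hle2 (by omega)
        exact (Finset.disjoint_left.mp this hvA1) hvA2
      subst hi12
      have : i1 = 0 := by
        by_contra h0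
        exact hTgood w (hT'T hw) w' (hT'T hw') hne (k - j + i1)
          (by omega) hle1 (by rw [hv1, hv2])
      subst this
      have hx : f (k - j) w = x := (Finset.mem_filter.mp (hT'S hw)).2
      rw [← hv1]; simpa using hx
  · -- contradiction: T covers S with too few elements
    exfalso
    push_neg at hTm
    -- every w in S collides with some w' ∈ T at some level
    have hcover : S ⊆ T.biUnion (fun w' => (Finset.range j).biUnion
        (fun j' => S.filter (fun w => f (k - j') w = f (k - j') w'))) := by
      intro w hwS
      by_cases hwT : w ∈ T
      · refine Finset.mem_biUnion.mpr ⟨w, hwT, ?_⟩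
        refine Finset.mem_biUnion.mpr ⟨0, Finset.mem_range.mpr (by omega), ?_⟩
        exact Finset.mem_filter.mpr ⟨hwS, rfl⟩
      · -- insert w T is not good by maximality
        have hnotgood : ¬ good (insert w T) := by
          intro hg
          have : insert w T ∈ (S.powerset).filter (fun T => good T) := by
            simp only [Finset.mem_filter, Finset.mem_powerset]
            exact ⟨Finset.insert_subset hwS hTS, hg⟩
          have := hTmax _ this
          rw [Finset.card_insert_of_notMem hwT] at this
          omega
        simp only [good] at hnotgood
        push_neg at hnotgood
        obtain ⟨w1, hw1, w2, hw2, hne, i, hi1, hi2, heq⟩ := hnotgood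
        rw [Finset.mem_insert] at hw1 hw2
        -- one of w1, w2 is w, the other is in T
        have key : ∃ w' ∈ T, ∃ i', k - j < i' ∧ i' ≤ k ∧ f i' w = f i' w' := by
          rcases hw1 with rfl | hw1T
          · rcases hw2 with rfl | hw2T
            · exact absurd rfl hne
            · exact ⟨w2, hw2T, i, hi1, hi2, heq⟩
          · rcases hw2 with rfl | hw2T
            · exact ⟨w1, hw1T, i, hi1, hi2, heq.symm⟩
            · exact absurd (hTgood w1 hw1T w2 hw2T hne i hi1 hi2 heq) (by simp)
        obtain ⟨w', hw'T, i', hi'1, hi'2, heq'⟩ := key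
        refine Finset.mem_biUnion.mpr ⟨w', hw'T, ?_⟩
        refine Finset.mem_biUnion.mpr ⟨k - i', Finset.mem_range.mpr (by omega), ?_⟩
        have : k - (k - i') = i' := by omega
        rw [this]
        exact Finset.mem_filter.mpr ⟨hwS, heq'⟩
    -- count
    have hbound : ∀ w' ∈ T, ∀ j' ∈ Finset.range j,
        (S.filter (fun w => f (k - j') w = f (k - j') w')).card
          ≤ m ^ j' - 1 + (if j' = 0 then 1 else 0) := by
      intro w' hw' j' hj'
      rw [Finset.mem_range] at hj'
      rcases Nat.eq_zero_or_pos j' with rfl | hj'pos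
      · simp only [if_pos rfl]
        have hsub : S.filter (fun w => f (k - 0) w = f (k - 0) w') ⊆ {w'} := by
          intro w hw
          obtain ⟨hwS, hweq⟩ := Finset.mem_filter.mp hw
          simp only [Nat.sub_zero] at hweq
          rw [hfk w (hSsub hwS), hfk w' (hSsub (hTS hw'))] at hweq
          simp [hweq]
        calc _ ≤ ({w'} : Finset V).card := Finset.card_le_card hsub
        _ = 1 := Finset.card_singleton w'
        _ ≤ _ := by norm_num
      · rw [if_neg (by omega)]
        have hvA : f (k - j') w' ∈ A (k - j') :=
          hmemA w' (hSsub (hTS hw')) (k - j') (by omega)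
        have hlt := hjmin j' hj'pos hj' _ hvA
        have hsub : S.filter (fun w => f (k - j') w = f (k - j') w') ⊆
            (A k).filter (fun w => f (k - j') w = f (k - j') w') :=
          Finset.filter_subset_filter _ hSsub
        have := Finset.card_le_card hsub
        omega
    have hgeom := stmt_3_geom m j hm
    have hsum : ∀ w' ∈ T, ∑ j' ∈ Finset.range j,
        (m ^ j' - 1 + (if j' = 0 then 1 else 0)) ≤ ∑ j' ∈ Finset.range j, m ^ j' := by
      intro w' _
      have h1 : ∑ j' ∈ Finset.range j, (if j' = 0 then (1:ℕ) else 0) = 1 := by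
        rw [Finset.sum_ite_eq' (Finset.range j) 0 (fun _ => (1:ℕ))]
        simp [Finset.mem_range]; omega
      rw [Finset.sum_add_distrib, h1]
      have h2 : ∑ j' ∈ Finset.range j, (m ^ j' - 1) + ∑ j' ∈ Finset.range j, (1:ℕ)
          = ∑ j' ∈ Finset.range j, m ^ j' := by
        rw [← Finset.sum_add_distrib]
        apply Finset.sum_congr rfl
        intro i _
        have : 1 ≤ m ^ i := Nat.one_le_pow _ _ (by omega)
        omega
      simp only [Finset.sum_const, Finset.card_range, smul_eq_mul, mul_one] at h2
      omega
    have hfinal : S.card ≤ (m - 1) * ∑ j' ∈ Finset.range j, m ^ j' := by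
      calc S.card ≤ _ := Finset.card_le_card hcover
        _ ≤ ∑ w' ∈ T, ((Finset.range j).biUnion
            (fun j' => S.filter (fun w => f (k - j') w = f (k - j') w'))).card :=
          Finset.card_biUnion_le
        _ ≤ ∑ w' ∈ T, ∑ j' ∈ Finset.range j,
            (S.filter (fun w => f (k - j') w = f (k - j') w')).card :=
          Finset.sum_le_sum (fun w' _ => Finset.card_biUnion_le)
        _ ≤ ∑ w' ∈ T, ∑ j' ∈ Finset.range j,
            (m ^ j' - 1 + (if j' = 0 then 1 else 0)) :=
          Finset.sum_le_sum (fun w' hw' => Finset.sum_le_sum (hbound w' hw'))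
        _ ≤ ∑ w' ∈ T, ∑ j' ∈ Finset.range j, m ^ j' :=
          Finset.sum_le_sum hsum
        _ = T.card * ∑ j' ∈ Finset.range j, m ^ j' := by
          rw [Finset.sum_const, smul_eq_mul]
        _ ≤ (m - 1) * ∑ j' ∈ Finset.range j, m ^ j' :=
          Nat.mul_le_mul_right _ (by omega)
    omega
end

section
/- Let m, k ≥ 1 be integers. Let z be a vertex and W a set of vertices not containing z with |W| ≥ (mk)^k. For each w ∈ W let P_w be a path of length k from z to w. Then there exist j ∈ [k], a vertex x, and m vertices w_1, …, w_m ∈ W such that the segments P_{w_i}[x, w_i] form a family of m paths of length j, every two of which share only the vertex x (i.e., their union is a balanced spider of height j with center x and m legs). -/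
/-!
Let `c = mk` and call a position `ℓ` heavy if some vertex `x` lies at position `ℓ` on at least
`c^(k-ℓ)` of the paths. Position `0` is heavy (every path starts at `z`); take the last heavy
position `k - j < k`. At every later position `k - i` each vertex lies on at most `c^i` paths,
so the part of one path beyond `x` meets the corresponding part of at most
`j (1 + c + ⋯ + c^(j-1))` paths through `x`. Since `(m - 1) j < c`, this is less than
`c^j / (m - 1)`, so the greedy choice picks `m` paths through `x` whose parts beyond `x` are
pairwise disjoint.
-/

open Finset

theorem Finset.exists_subset_card_eq_pairwise_of_card_nbhd_le {α : Type*} [DecidableEq α]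
    {R : α → α → Prop} [DecidableRel R] (hR : ∀ a b, R a b → R b a) {A : Finset α} {d : ℕ}
    (hdeg : ∀ a ∈ A, #{b ∈ A | a = b ∨ R a b} ≤ d) :
    ∀ m, (m - 1) * d < #A → ∃ T ⊆ A, #T = m ∧ (T : Set α).Pairwise fun a b => ¬ R a b
  | 0, _ => ⟨∅, empty_subset _, rfl, by simp⟩
  | m + 1, hA => by
    obtain ⟨T, hTA, hTm, hT⟩ := exists_subset_card_eq_pairwise_of_card_nbhd_le hR hdeg m
      ((Nat.mul_le_mul_right _ (Nat.sub_le m 1)).trans_lt hA)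
    have hK : #(T.biUnion fun a => {b ∈ A | a = b ∨ R a b}) < #A :=
      (card_biUnion_le_card_mul _ _ _ fun a ha => hdeg a (hTA ha)).trans_lt
        (by simpa [hTm] using hA)
    obtain ⟨w, hwA, hwK⟩ := exists_mem_notMem_of_card_lt_card hK
    simp only [mem_biUnion, mem_filter, not_exists, not_and, not_or] at hwK
    have hwT : w ∉ T := fun hw => (hwK w hw hwA).1 rfl
    refine ⟨insert w T, insert_subset hwA hTA, by rw [card_insert_of_notMem hwT, hTm], ?_⟩
    rw [coe_insert]
    exact hT.insert fun b hb _ => ⟨fun h => (hwK b hb hwA).2 (hR _ _ h), (hwK b hb hwA).2⟩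

theorem exists_heavy_level {β : Type*} (g : ℕ → β → ℕ) {c k : ℕ} (hk : 1 ≤ k) {z : β}
    (hfirst : c ^ k ≤ g 0 z) (hlast : ∀ u, g k u ≤ 1) :
    ∃ j, 1 ≤ j ∧ j ≤ k ∧ (∃ x, c ^ j ≤ g (k - j) x) ∧ ∀ i < j, ∀ u, g (k - i) u ≤ c ^ i := by
  classical
  have hex : ∃ j, 1 ≤ j ∧ ∃ x, c ^ j ≤ g (k - j) x := ⟨k, hk, z, by rwa [Nat.sub_self]⟩
  refine ⟨Nat.find hex, (Nat.find_spec hex).1, Nat.find_min' hex ⟨hk, z, by rwa [Nat.sub_self]⟩,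
    (Nat.find_spec hex).2, fun i hi u => ?_⟩
  rcases Nat.eq_zero_or_pos i with rfl | hi0
  · simpa using hlast u
  · by_contra hu
    exact Nat.find_min hex hi ⟨hi0, u, (not_le.mp hu).le⟩

theorem mul_mul_geom_sum_lt {c d j : ℕ} (hc : 0 < c) (h : d * j < c) :
    d * (j * ∑ i ∈ range j, c ^ i) < c ^ j := by
  have hgeom := geom_sum_mul_add (c - 1) j
  rw [Nat.sub_add_cancel (show 1 ≤ c from hc)] at hgeom
  calc d * (j * ∑ i ∈ range j, c ^ i) = (d * j) * ∑ i ∈ range j, c ^ i := (mul_assoc _ _ _).symm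
    _ ≤ (c - 1) * ∑ i ∈ range j, c ^ i := Nat.mul_le_mul_right _ (by omega)
    _ < c ^ j := by rw [← hgeom, mul_comm]; omega

namespace List

variable {α : Type*} {l : List α} {u : α}

theorem mem_drop_of_getElem?_eq {n p : ℕ} (hu : l[p]? = some u) (hnp : n ≤ p) : u ∈ l.drop n :=
  mem_iff_getElem?.mpr ⟨p - n, by rwa [getElem?_drop, Nat.add_sub_cancel' hnp]⟩

theorem exists_getElem?_sub_eq_of_mem_drop {n j : ℕ} (hl : l.length = n + 1) (hjn : j ≤ n)
    (hu : u ∈ l.drop (n - j + 1)) : ∃ i < j, l[n - i]? = some u := by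
  obtain ⟨p, hp, rfl⟩ := mem_drop_iff_getElem.mp hu
  have hpn : p + (n - j + 1) < n + 1 := hl ▸ hp
  refine ⟨j - 1 - p, by omega, ?_⟩
  rw [show n - (j - 1 - p) = n - j + 1 + p by omega]
  exact getElem?_eq_getElem (by omega)

end List

section Fibers

variable {V : Type*} [DecidableEq V] {W : Finset V} {P : V → List V} {k : ℕ}

def fiberAt (W : Finset V) (P : V → List V) (ℓ : ℕ) (v : V) : Finset V :=
  {w ∈ W | (P w)[ℓ]? = some v}

theorem fiberAt_eq_self {z : V} (hhead : ∀ w ∈ W, (P w)[0]? = some z) : fiberAt W P 0 z = W :=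
  filter_true_of_mem hhead

theorem card_fiberAt_le_one (hlast : ∀ w ∈ W, (P w)[k]? = some w) (u : V) :
    #(fiberAt W P k u) ≤ 1 :=
  card_le_one.mpr fun a ha b hb => by
    simp only [fiberAt, mem_filter] at ha hb
    exact Option.some_injective _ (((hlast a ha.1).symm.trans ha.2).trans
      ((hlast b hb.1).symm.trans hb.2).symm)

theorem drop_eq_cons_of_mem_fiberAt {ℓ : ℕ} {x w : V} (hw : w ∈ fiberAt W P ℓ x) :
    (P w).drop ℓ = x :: (P w).drop (ℓ + 1) := by
  obtain ⟨hlt, hx⟩ := List.getElem?_eq_some_iff.mp (mem_filter.mp hw).2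
  rw [List.drop_eq_getElem_cons hlt, hx]

theorem card_filter_tails_meet_le (hlen : ∀ w ∈ W, (P w).length = k + 1)
    (hlast : ∀ w ∈ W, (P w)[k]? = some w) {c j : ℕ} (hj : 1 ≤ j) (hjk : j ≤ k)
    (hlight : ∀ i < j, ∀ u, #(fiberAt W P (k - i) u) ≤ c ^ i) {w : V} (hw : w ∈ W) :
    #{b ∈ W | w = b ∨ ∃ u ∈ (P w).drop (k - j + 1), u ∈ (P b).drop (k - j + 1)} ≤
      j * ∑ i ∈ range j, c ^ i := by
  set tail := ((P w).drop (k - j + 1)).toFinset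
  have hsub : {b ∈ W | w = b ∨ ∃ u ∈ (P w).drop (k - j + 1), u ∈ (P b).drop (k - j + 1)} ⊆
      tail.biUnion fun u => (range j).biUnion fun i => fiberAt W P (k - i) u := by
    intro b hb
    obtain ⟨hbW, hwb⟩ := mem_filter.mp hb
    obtain ⟨u, huw, hub⟩ : ∃ u ∈ (P w).drop (k - j + 1), u ∈ (P b).drop (k - j + 1) := by
      rcases hwb with rfl | hmeet
      · have hself := List.mem_drop_of_getElem?_eq (hlast w hw) (by omega : k - j + 1 ≤ k)
        exact ⟨w, hself, hself⟩
      · exact hmeet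
    obtain ⟨i, hij, hi⟩ := List.exists_getElem?_sub_eq_of_mem_drop (hlen b hbW) hjk hub
    simp only [mem_biUnion, mem_range, fiberAt, mem_filter]
    exact ⟨u, List.mem_toFinset.mpr huw, i, hij, hbW, hi⟩
  have htail : #tail ≤ j :=
    (List.toFinset_card_le _).trans (by rw [List.length_drop, hlen w hw]; omega)
  calc _ ≤ _ := card_le_card hsub
    _ ≤ #tail * ∑ i ∈ range j, c ^ i := card_biUnion_le_card_mul _ _ _ fun u _ =>
        card_biUnion_le.trans (sum_le_sum fun i hi => hlight i (mem_range.mp hi) u)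
    _ ≤ j * ∑ i ∈ range j, c ^ i := Nat.mul_le_mul_right _ htail

end Fibers

theorem stmt_4_general {V : Type*} (k m : ℕ)
    (hk : 1 ≤ k) (hm : 1 ≤ m)
    (z : V) (W : Finset V)
    (hW : (m * k) ^ k ≤ W.card)
    (P : V → List V)
    (hlen : ∀ w ∈ W, (P w).length = k + 1)
    (hends : ∀ w ∈ W, (P w).head? = some z ∧ (P w).getLast? = some w) :
    ∃ j, 1 ≤ j ∧ j ≤ k ∧ ∃ x : V, ∃ T ⊆ W, T.card = m ∧
      (∀ w ∈ T, ((P w).drop (k - j)).head? = some x) ∧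
      ∀ w ∈ T, ∀ w' ∈ T, w ≠ w' →
        ∀ v, v ∈ (P w).drop (k - j) → v ∈ (P w').drop (k - j) → v = x := by
  classical
  have hhead : ∀ w ∈ W, (P w)[0]? = some z := fun w hw => by
    simpa [List.head?_eq_getElem?] using (hends w hw).1
  have hlast : ∀ w ∈ W, (P w)[k]? = some w := fun w hw => by
    simpa [List.getLast?_eq_getElem?, hlen w hw] using (hends w hw).2
  obtain ⟨j, hj, hjk, ⟨x, hx⟩, hlight⟩ := exists_heavy_level (fun ℓ v => #(fiberAt W P ℓ v)) hk
    (by rwa [fiberAt_eq_self hhead]) (card_fiberAt_le_one hlast)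
  have hdeg : ∀ w ∈ fiberAt W P (k - j) x, #{b ∈ fiberAt W P (k - j) x | w = b ∨
      ∃ u ∈ (P w).drop (k - j + 1), u ∈ (P b).drop (k - j + 1)} ≤ j * ∑ i ∈ range j, (m * k) ^ i :=
    fun w hw => (card_le_card (filter_subset_filter _ (filter_subset _ _))).trans
      (card_filter_tails_meet_le hlen hlast hj hjk hlight (mem_filter.mp hw).1)
  have hmj : (m - 1) * j < m * k :=
    (Nat.mul_le_mul_left _ hjk).trans_lt (Nat.mul_lt_mul_of_pos_right (by omega) hk)
  obtain ⟨T, hTA, hTm, hT⟩ := exists_subset_card_eq_pairwise_of_card_nbhd_le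
    (fun _ _ ⟨u, ha, hb⟩ => ⟨u, hb, ha⟩) hdeg m
    ((mul_mul_geom_sum_lt (by positivity) hmj).trans_le hx)
  refine ⟨j, hj, hjk, x, T, hTA.trans (filter_subset _ _), hTm, fun w hw => ?_,
    fun w hw w' hw' hne v hv hv' => ?_⟩
  · rw [drop_eq_cons_of_mem_fiberAt (hTA hw)]; rfl
  · rw [drop_eq_cons_of_mem_fiberAt (hTA hw), List.mem_cons] at hv
    rw [drop_eq_cons_of_mem_fiberAt (hTA hw'), List.mem_cons] at hv'
    by_contra hvx
    exact hT hw hw' hne ⟨v, hv.resolve_left hvx, hv'.resolve_left hvx⟩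

/-- spider lemma, Lemma 3.9 of the paper.
If `z` is a vertex, `W` a set of vertices not containing `z` with
`|W| ≥ (mk)^k`, and for each `w ∈ W` we have a `z,w`-path `P w` of length `k`,
then for some `j ∈ [k]` there are a vertex `x` and `m` vertices `w ∈ W` whose
terminal segments `P w [x, w]` are paths of length `j` every two of which share
only the vertex `x` (their union is a balanced spider of height `j`). -/
theorem stmt_4 {V : Type*} [DecidableEq V] (G : SimpleGraph V) (k m : ℕ)
    (hk : 1 ≤ k) (hm : 1 ≤ m)
    (z : V) (W : Finset V) (hzW : z ∉ W)
    (hW : (m * k) ^ k ≤ W.card)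
    (P : V → List V)
    (hlen : ∀ w ∈ W, (P w).length = k + 1)
    (hpath : ∀ w ∈ W, (P w).Chain' G.Adj ∧ (P w).Nodup)
    (hends : ∀ w ∈ W, (P w).head? = some z ∧ (P w).getLast? = some w) :
    ∃ j, 1 ≤ j ∧ j ≤ k ∧ ∃ x : V, ∃ T ⊆ W, T.card = m ∧
      (∀ w ∈ T, ((P w).drop (k - j)).head? = some x) ∧
      ∀ w ∈ T, ∀ w' ∈ T, w ≠ w' →
        ∀ v, v ∈ (P w).drop (k - j) → v ∈ (P w').drop (k - j) → v = x :=
  stmt_4_general k m hk hm z W hW P hlen hends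
end
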